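/- arXiv:1205.0517 — 10 statements merged into one kernel-verified Lean document; each statement's English description precedes it below -/
import Mathlib

section
/- For every s ∈ ℝ one has the implicit equation s = r(s)·√(1 + 2 r(s)²)/2 + (1/(2√2))·arsinh(√2 · r(s)), where arsinh denotes the inverse hyperbolic sine. -/
open Real

lemma F_hasDerivAt (x : ℝ) :
    HasDerivAt (fun x : ℝ => x * Real.sqrt (1 + 2 * x ^ 2) / 2
      + (1 / (2 * Real.sqrt 2)) * Real.arsinh (Real.sqrt 2 * x))
      (Real.sqrt (1 + 2 * x ^ 2)) x := by
  have hpos : (0:ℝ) < 1 + 2 * x ^ 2 := by positivity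
  have hsq : Real.sqrt (1 + 2 * x ^ 2) > 0 := Real.sqrt_pos.mpr hpos
  have hinner : HasDerivAt (fun x : ℝ => 1 + 2 * x ^ 2) (4 * x) x := by
    have := ((hasDerivAt_pow 2 x).const_mul (2:ℝ)).const_add 1
    refine this.congr_deriv ?_
    ring
  have hsqrt : HasDerivAt (fun x : ℝ => Real.sqrt (1 + 2 * x ^ 2))
      (4 * x / (2 * Real.sqrt (1 + 2 * x ^ 2))) x :=
    hinner.sqrt (ne_of_gt hpos)
  have h1 : HasDerivAt (fun x : ℝ => x * Real.sqrt (1 + 2 * x ^ 2) / 2)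
      ((Real.sqrt (1 + 2 * x ^ 2) + x * (4 * x / (2 * Real.sqrt (1 + 2 * x ^ 2)))) / 2) x := by
    simpa using ((hasDerivAt_id x).mul hsqrt).div_const 2
  have harsinh : HasDerivAt (fun x : ℝ => Real.arsinh (Real.sqrt 2 * x))
      ((Real.sqrt (1 + (Real.sqrt 2 * x) ^ 2))⁻¹ * Real.sqrt 2) x := by
    have hlin : HasDerivAt (fun y : ℝ => Real.sqrt 2 * y) (Real.sqrt 2) x := by
      simpa using (hasDerivAt_id x).const_mul (Real.sqrt 2)
    exact (Real.hasDerivAt_arsinh (Real.sqrt 2 * x)).comp x hlin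
  have h2 : HasDerivAt (fun x : ℝ => (1 / (2 * Real.sqrt 2)) * Real.arsinh (Real.sqrt 2 * x))
      ((1 / (2 * Real.sqrt 2)) * ((Real.sqrt (1 + (Real.sqrt 2 * x) ^ 2))⁻¹ * Real.sqrt 2)) x :=
    harsinh.const_mul _
  have hsum := h1.add h2
  have hs2 : (Real.sqrt 2) ^ 2 = 2 := Real.sq_sqrt (by norm_num)
  have hrw : (Real.sqrt 2 * x) ^ 2 = 2 * x ^ 2 := by rw [mul_pow, hs2]
  have hsqne : Real.sqrt (1 + 2 * x ^ 2) ≠ 0 := ne_of_gt hsq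
  have hs2ne : Real.sqrt 2 ≠ 0 := by positivity
  refine hsum.congr_deriv ?_
  rw [hrw]
  have hsqsq : Real.sqrt (1 + 2 * x ^ 2) ^ 2 = 1 + 2 * x ^ 2 := Real.sq_sqrt (le_of_lt hpos)
  field_simp
  linear_combination (-2) * hsqsq

/-- The solution `r` of `r'(s) = 1/√(1 + 2 r(s)²)`, `r(0) = 0` satisfies the implicit
equation `s = r(s)√(1 + 2r(s)²)/2 + arsinh(√2 r(s))/(2√2)`. -/
theorem r_implicit_equation (r : ℝ → ℝ) (hr0 : r 0 = 0)
    (hr' : ∀ s : ℝ, HasDerivAt r ((Real.sqrt (1 + 2 * r s ^ 2))⁻¹) s) :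
    ∀ s : ℝ, s = r s * Real.sqrt (1 + 2 * r s ^ 2) / 2
      + (1 / (2 * Real.sqrt 2)) * Real.arsinh (Real.sqrt 2 * r s) := by
  set F : ℝ → ℝ := fun x => x * Real.sqrt (1 + 2 * x ^ 2) / 2
      + (1 / (2 * Real.sqrt 2)) * Real.arsinh (Real.sqrt 2 * x) with hF
  have hG : ∀ s : ℝ, HasDerivAt (fun s => F (r s) - s) 0 s := by
    intro s
    have hpos : (0:ℝ) < 1 + 2 * r s ^ 2 := by positivity
    have hcomp : HasDerivAt (fun s => F (r s))
        (Real.sqrt (1 + 2 * r s ^ 2) * (Real.sqrt (1 + 2 * r s ^ 2))⁻¹) s :=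
      (F_hasDerivAt (r s)).comp s (hr' s)
    have : HasDerivAt (fun s => F (r s) - s)
        (Real.sqrt (1 + 2 * r s ^ 2) * (Real.sqrt (1 + 2 * r s ^ 2))⁻¹ - 1) s :=
      hcomp.sub (hasDerivAt_id s)
    simpa [mul_inv_cancel₀ (ne_of_gt (Real.sqrt_pos.mpr hpos))] using this
  have hconst : ∀ s : ℝ, F (r s) - s = F (r 0) - 0 := by
    intro s
    exact is_const_of_deriv_eq_zero (fun t => (hG t).differentiableAt)
      (fun t => (hG t).deriv) s 0
  intro s
  have h0 : F 0 = 0 := by simp [hF]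
  have h := hconst s
  rw [hr0, h0] at h
  have hFr : F (r s) = s := by linarith
  simp only [hF] at hFr
  exact hFr.symm
end

section
/- For every s ≥ 0 one has r(s)/2 ≤ s·r'(s) ≤ r(s); equivalently, r(s)/2 ≤ s/√(1 + 2 r(s)²) ≤ r(s). -/
lemma mono_of_hasDerivAt_nonneg {f f' : ℝ → ℝ}
    (h : ∀ x, HasDerivAt f (f' x) x) (h' : ∀ x, 0 ≤ f' x) : Monotone f := by
  have hd : Differentiable ℝ f := fun x => (h x).differentiableAt
  refine monotone_of_deriv_nonneg hd fun x => ?_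
  rw [(h x).deriv]; exact h' x

/-- For `s ≥ 0`, the solution `r` of `r'(s) = 1/√(1 + 2 r(s)²)`, `r(0) = 0` satisfies
`r(s)/2 ≤ s·r'(s) ≤ r(s)`, i.e. `r(s)/2 ≤ s/√(1 + 2 r(s)²) ≤ r(s)`. -/
theorem r_halving_inequality (r : ℝ → ℝ) (hr0 : r 0 = 0)
    (hr' : ∀ s : ℝ, HasDerivAt r ((Real.sqrt (1 + 2 * r s ^ 2))⁻¹) s) :
    ∀ s : ℝ, 0 ≤ s →
      r s / 2 ≤ s / Real.sqrt (1 + 2 * r s ^ 2) ∧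
      s / Real.sqrt (1 + 2 * r s ^ 2) ≤ r s := by
  set g : ℝ → ℝ := fun s => Real.sqrt (1 + 2 * r s ^ 2) with hg
  have hpos : ∀ s, (0:ℝ) < 1 + 2 * r s ^ 2 := fun s => by positivity
  have hgpos : ∀ s, 0 < g s := fun s => Real.sqrt_pos.mpr (hpos s)
  have hgsq : ∀ s, g s ^ 2 = 1 + 2 * r s ^ 2 := fun s =>
    Real.sq_sqrt (hpos s).le
  -- derivative of s ↦ r s * g s
  have hP : ∀ s, HasDerivAt (fun s => r s * g s)
      (1 + 2 * r s ^ 2 / (1 + 2 * r s ^ 2)) s := by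
    intro s
    have hin : HasDerivAt (fun s => 1 + 2 * r s ^ 2)
        (2 * (2 * r s ^ 1 * (g s)⁻¹)) s :=
      (((hr' s).pow 2).const_mul 2).const_add 1
    have hgd : HasDerivAt g
        ((2 * (2 * r s ^ 1 * (g s)⁻¹)) / (2 * g s)) s :=
      hin.sqrt (ne_of_gt (hpos s))
    have := (hr' s).mul hgd
    refine this.congr_deriv ?_
    show (g s)⁻¹ * g s + _ = _
    have h1 : g s ≠ 0 := (hgpos s).ne'
    have h2 : g s * g s = 1 + 2 * r s ^ 2 := by
      have := hgsq s; nlinarith [hgsq s]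
    field_simp
    nlinarith [hgsq s]
  have hB : ∀ s, HasDerivAt (fun s => r s * g s - s)
      (2 * r s ^ 2 / (1 + 2 * r s ^ 2)) s := by
    intro s
    have := (hP s).sub (hasDerivAt_id s)
    refine this.congr_deriv ?_
    field_simp
    ring
  have hA : ∀ s, HasDerivAt (fun s => 2 * s - r s * g s)
      (1 / (1 + 2 * r s ^ 2)) s := by
    intro s
    have := ((hasDerivAt_id s).const_mul 2).sub (hP s)
    refine this.congr_deriv ?_
    have := (hpos s).ne'
    field_simp
    ring
  have hBmono : Monotone (fun s => r s * g s - s) :=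
    mono_of_hasDerivAt_nonneg hB (fun s => by positivity)
  have hAmono : Monotone (fun s => 2 * s - r s * g s) :=
    mono_of_hasDerivAt_nonneg hA (fun s => by positivity)
  intro s hs
  have hBs : 0 ≤ r s * g s - s := by
    have := hBmono hs; simpa [hr0] using this
  have hAs : 0 ≤ 2 * s - r s * g s := by
    have := hAmono hs; simpa [hr0] using this
  constructor
  · rw [div_le_div_iff₀ two_pos (hgpos s)]; linarith
  · rw [div_le_iff₀ (hgpos s)]; linarith
end

section
/- The function r satisfies lim_{s→+∞} r(s)/√s = 2^{1/4}. -/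
open Filter

noncomputable def Gaux (x : ℝ) : ℝ :=
  x * Real.sqrt (1 + 2 * x ^ 2) / 2 + Real.sqrt 2 / 4 * Real.arsinh (Real.sqrt 2 * x)

lemma sqrt_aux_pos (x : ℝ) : 0 < Real.sqrt (1 + 2 * x ^ 2) :=
  Real.sqrt_pos.2 (by positivity)

lemma sqrt_aux_sq (x : ℝ) :
    Real.sqrt (1 + 2 * x ^ 2) * Real.sqrt (1 + 2 * x ^ 2) = 1 + 2 * x ^ 2 :=
  Real.mul_self_sqrt (by positivity)

lemma hasDerivAt_Gaux (x : ℝ) : HasDerivAt Gaux (Real.sqrt (1 + 2 * x ^ 2)) x := by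
  have h0 : (1 : ℝ) + 2 * x ^ 2 ≠ 0 := by positivity
  have hs := sqrt_aux_pos x
  have hsq := sqrt_aux_sq x
  have h1 : HasDerivAt (fun x : ℝ => 1 + 2 * x ^ 2) (4 * x) x := by
    have h := ((hasDerivAt_pow 2 x).const_mul (2:ℝ)).const_add (1:ℝ)
    refine h.congr_deriv (Eq.symm ?_)
    push_cast
    ring
  have h2 : HasDerivAt (fun x : ℝ => Real.sqrt (1 + 2 * x ^ 2))
      (2 * x / Real.sqrt (1 + 2 * x ^ 2)) x := by
    have := (Real.hasDerivAt_sqrt h0).comp x h1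
    refine this.congr_deriv (Eq.symm ?_)
    field_simp
    ring
  have h3 : HasDerivAt (fun x : ℝ => x * Real.sqrt (1 + 2 * x ^ 2) / 2)
      ((1 + 4 * x ^ 2) / (2 * Real.sqrt (1 + 2 * x ^ 2))) x := by
    have := ((hasDerivAt_id x).mul h2).div_const 2
    refine this.congr_deriv (Eq.symm ?_)
    simp only [id]
    field_simp
    rw [Real.sq_sqrt (by positivity)]
    ring
  have h4 : HasDerivAt (fun x : ℝ => Real.sqrt 2 / 4 * Real.arsinh (Real.sqrt 2 * x))
      (1 / (2 * Real.sqrt (1 + 2 * x ^ 2))) x := by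
    have ha : HasDerivAt Real.arsinh ((Real.sqrt (1 + (Real.sqrt 2 * x) ^ 2))⁻¹)
        (Real.sqrt 2 * x) := Real.hasDerivAt_arsinh _
    have hl : HasDerivAt (fun x : ℝ => Real.sqrt 2 * x) (Real.sqrt 2) x := by
      simpa using (hasDerivAt_id x).const_mul (Real.sqrt 2)
    have := (ha.comp x hl).const_mul (Real.sqrt 2 / 4)
    have h2x : (1 + (Real.sqrt 2 * x) ^ 2) = 1 + 2 * x ^ 2 := by
      rw [mul_pow, Real.sq_sqrt (by norm_num : (0:ℝ) ≤ 2)]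
    rw [h2x] at this
    refine this.congr_deriv (Eq.symm ?_)
    have hs2 : Real.sqrt 2 * Real.sqrt 2 = 2 := Real.mul_self_sqrt (by norm_num)
    field_simp
    nlinarith [hs2]
  have := h3.add h4
  refine this.congr_deriv (Eq.symm ?_)
  field_simp
  nlinarith [hsq]

lemma Gaux_zero : Gaux 0 = 0 := by simp [Gaux]

lemma strictMono_Gaux : StrictMono Gaux :=
  strictMono_of_deriv_pos fun x => by
    rw [(hasDerivAt_Gaux x).deriv]; exact sqrt_aux_pos x

set_option maxHeartbeats 1000000 in
/-- The solution `r` of `r'(s) = 1/√(1 + 2 r(s)²)`, `r(0) = 0` satisfies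
`lim_{s→+∞} r(s)/√s = 2^{1/4}`. -/
theorem r_asymptotic_at_infinity (r : ℝ → ℝ) (hr0 : r 0 = 0)
    (hr' : ∀ s : ℝ, HasDerivAt r ((Real.sqrt (1 + 2 * r s ^ 2))⁻¹) s) :
    Tendsto (fun s => r s / Real.sqrt s) atTop (nhds ((2:ℝ) ^ ((1:ℝ)/4))) := by
  -- step 1: G (r s) = s
  have hφ : ∀ s : ℝ, HasDerivAt (fun s => Gaux (r s) - s) 0 s := by
    intro s
    have := ((hasDerivAt_Gaux (r s)).comp s (hr' s)).sub (hasDerivAt_id s)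
    refine this.congr_deriv (Eq.symm ?_)
    rw [mul_inv_cancel₀ (ne_of_gt (sqrt_aux_pos (r s)))]
    ring
  have hkey : ∀ s : ℝ, Gaux (r s) = s := by
    intro s
    have hconst := is_const_of_deriv_eq_zero
      (fun x => (hφ x).differentiableAt) (fun x => (hφ x).deriv) s 0
    simp only [hr0, Gaux_zero, sub_zero] at hconst
    linarith [hconst]
  -- step 2: r (Gaux b) = b, r tendsto atTop
  have hrG : ∀ b : ℝ, r (Gaux b) = b := fun b =>
    strictMono_Gaux.injective (hkey (Gaux b))
  have hrmono : Monotone r :=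
    (strictMono_of_deriv_pos fun s => by
      rw [(hr' s).deriv]; exact inv_pos.2 (sqrt_aux_pos (r s))).monotone
  have htop : Tendsto r atTop atTop :=
    tendsto_atTop_atTop_of_monotone hrmono fun b => ⟨Gaux b, (hrG b).ge⟩
  -- step 3: Gaux x / x^2 → √2 / 2
  have hA : Tendsto (fun x : ℝ => Real.sqrt (1 + 2 * x ^ 2) / x / 2) atTop
      (nhds (Real.sqrt 2 / 2)) := by
    have h1 : Tendsto (fun x : ℝ => 1 / x ^ 2 + 2) atTop (nhds 2) := by
      have h0 : Tendsto (fun x : ℝ => (x ^ 2)⁻¹) atTop (nhds (0:ℝ)) :=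
        (tendsto_pow_atTop two_ne_zero).inv_tendsto_atTop
      have := h0.add_const (2:ℝ)
      rw [zero_add] at this
      exact this.congr fun x => by rw [one_div]
    have h2 : Tendsto (fun x : ℝ => Real.sqrt (1 / x ^ 2 + 2) / 2) atTop
        (nhds (Real.sqrt 2 / 2)) :=
      ((Real.continuous_sqrt.continuousAt.tendsto.comp h1).div_const 2)
    refine h2.congr' ?_
    filter_upwards [eventually_gt_atTop (0:ℝ)] with x hx
    have : (1 / x ^ 2 + 2) = (1 + 2 * x ^ 2) / x ^ 2 := by field_simp
    rw [this]
    rw [Real.sqrt_div (by positivity : (0:ℝ) ≤ 1 + 2 * x ^ 2) (x ^ 2)]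
    rw [Real.sqrt_sq hx.le]
  have hB : Tendsto (fun x : ℝ => Real.sqrt 2 / 4 * Real.arsinh (Real.sqrt 2 * x) / x ^ 2)
      atTop (nhds 0) := by
    have hs2 : Real.sqrt 2 * Real.sqrt 2 = 2 := Real.mul_self_sqrt (by norm_num)
    have harsinh : ∀ y : ℝ, 0 ≤ y → Real.arsinh y ≤ 2 * y := by
      intro y hy
      rw [Real.arsinh]
      have h1 : Real.sqrt (1 + y ^ 2) ≤ 1 + y := by
        rw [show (1:ℝ) + y = Real.sqrt ((1+y)^2) from (Real.sqrt_sq (by linarith)).symm]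
        exact Real.sqrt_le_sqrt (by nlinarith)
      calc Real.log (y + Real.sqrt (1 + y ^ 2)) ≤ (y + Real.sqrt (1 + y ^ 2)) - 1 :=
            Real.log_le_sub_one_of_pos (by positivity)
        _ ≤ 2 * y := by linarith
    have hub : Tendsto (fun x : ℝ => 1 / x) atTop (nhds (0:ℝ)) := by
      simpa [one_div] using (tendsto_inv_atTop_zero : Tendsto (fun x : ℝ => x⁻¹) atTop (nhds 0))
    refine tendsto_of_tendsto_of_tendsto_of_le_of_le' tendsto_const_nhds hub ?_ ?_
    · filter_upwards [eventually_gt_atTop (0:ℝ)] with x hx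
      have := Real.arsinh_nonneg_iff.2 (by positivity : (0:ℝ) ≤ Real.sqrt 2 * x)
      positivity
    · filter_upwards [eventually_gt_atTop (0:ℝ)] with x hx
      have h1 : Real.arsinh (Real.sqrt 2 * x) ≤ 2 * (Real.sqrt 2 * x) :=
        harsinh _ (by positivity)
      rw [div_le_div_iff₀ (by positivity) (by positivity)]
      have h2 : (0:ℝ) < Real.sqrt 2 / 4 := by positivity
      calc Real.sqrt 2 / 4 * Real.arsinh (Real.sqrt 2 * x) * x
          ≤ Real.sqrt 2 / 4 * (2 * (Real.sqrt 2 * x)) * x :=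
            mul_le_mul_of_nonneg_right (mul_le_mul_of_nonneg_left h1 h2.le) hx.le
        _ = 1 * x ^ 2 := by linear_combination (x ^ 2 / 2) * hs2
  -- combine: Gaux x / x^2 → √2/2
  have hGx : Tendsto (fun x : ℝ => Gaux x / x ^ 2) atTop (nhds (Real.sqrt 2 / 2)) := by
    have := hA.add hB
    rw [add_zero] at this
    refine this.congr' ?_
    filter_upwards [eventually_gt_atTop (0:ℝ)] with x hx
    have hxne : x ≠ 0 := hx.ne'
    rw [Gaux, add_div]
    congr 1
    field_simp
  -- invert: x^2 / Gaux x → √2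
  have hinv : Tendsto (fun x : ℝ => x ^ 2 / Gaux x) atTop (nhds (Real.sqrt 2)) := by
    have hne : Real.sqrt 2 / 2 ≠ 0 := by positivity
    have := hGx.inv₀ hne
    rw [inv_div, Real.div_sqrt] at this
    refine this.congr fun x => by rw [inv_div]
  -- sqrt: √(x^2 / Gaux x) → √√2, and that equals x / √(Gaux x) eventually
  have hGpos : ∀ x : ℝ, 0 < x → 0 < Gaux x := fun x hx => by
    have := strictMono_Gaux hx
    rwa [Gaux_zero] at this
  have hfin : Tendsto (fun x : ℝ => x / Real.sqrt (Gaux x)) atTop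
      (nhds (Real.sqrt (Real.sqrt 2))) := by
    have h1 := Real.continuous_sqrt.continuousAt.tendsto.comp hinv
    refine h1.congr' ?_
    filter_upwards [eventually_gt_atTop (0:ℝ)] with x hx
    show Real.sqrt (x ^ 2 / Gaux x) = x / Real.sqrt (Gaux x)
    rw [Real.sqrt_div (sq_nonneg x), Real.sqrt_sq hx.le]
  -- conclude
  have hval : Real.sqrt (Real.sqrt 2) = (2:ℝ) ^ ((1:ℝ)/4) := by
    rw [show ((1:ℝ)/4) = 1/2 * (1/2) by norm_num,
      Real.rpow_mul (by norm_num : (0:ℝ) ≤ 2), ← Real.sqrt_eq_rpow, ← Real.sqrt_eq_rpow]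
  rw [← hval]
  have := hfin.comp htop
  refine this.congr fun s => ?_
  simp only [Function.comp_apply, hkey s]
end

section
/- For every s ≥ 0 one has r(s)² ≤ √2 · s. -/
lemma key_ineq (x : ℝ) : 2 * x * (Real.sqrt (1 + 2 * x ^ 2))⁻¹ ≤ Real.sqrt 2 := by
  have h1 : (0:ℝ) < 1 + 2 * x ^ 2 := by positivity
  have ht : 0 < Real.sqrt (1 + 2 * x ^ 2) := Real.sqrt_pos.mpr h1
  have ht2 : Real.sqrt (1 + 2 * x ^ 2) ^ 2 = 1 + 2 * x ^ 2 := Real.sq_sqrt h1.le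
  have h2 : Real.sqrt 2 ^ 2 = 2 := Real.sq_sqrt (by norm_num)
  have h2p : 0 < Real.sqrt 2 := Real.sqrt_pos.mpr (by norm_num)
  rw [mul_inv_le_iff₀ ht]
  nlinarith [sq_nonneg (Real.sqrt 2 * Real.sqrt (1 + 2 * x ^ 2) - 2 * x),
    mul_pos h2p ht]

/-- For `s ≥ 0` the solution `r` of `r'(s) = 1/√(1 + 2 r(s)²)`, `r(0) = 0`
satisfies `r(s)² ≤ √2 · s`. -/
theorem r_sq_le_sqrt_two_mul (r : ℝ → ℝ) (hr0 : r 0 = 0)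
    (hr' : ∀ s : ℝ, HasDerivAt r ((Real.sqrt (1 + 2 * r s ^ 2))⁻¹) s) :
    ∀ s : ℝ, 0 ≤ s → r s ^ 2 ≤ Real.sqrt 2 * s := by
  set f : ℝ → ℝ := fun s => Real.sqrt 2 * s - r s ^ 2 with hf
  have hf' : ∀ s : ℝ, HasDerivAt f
      (Real.sqrt 2 - 2 * r s * (Real.sqrt (1 + 2 * r s ^ 2))⁻¹) s := by
    intro s
    have h1 : HasDerivAt (fun s => Real.sqrt 2 * s) (Real.sqrt 2) s := by
      simpa using (hasDerivAt_id s).const_mul (Real.sqrt 2)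
    have h2 : HasDerivAt (fun s => r s ^ 2)
        (2 * r s ^ 1 * (Real.sqrt (1 + 2 * r s ^ 2))⁻¹) s := by
      simpa using (hr' s).fun_pow 2
    simpa [pow_one] using h1.fun_sub h2
  have hmono : Monotone f := by
    apply monotone_of_deriv_nonneg
    · exact fun s => (hf' s).differentiableAt
    · intro s
      rw [(hf' s).deriv]
      have := key_ineq (r s)
      linarith
  intro s hs
  have := hmono hs
  simp [f, hr0] at this
  linarith
end

section
/- The map v ↦ r(v) / (v · √(1 + 2 r(v)²)) is decreasing on (0, +∞). -/
lemma sqrt_deriv_aux (r : ℝ → ℝ)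
    (hr' : ∀ s : ℝ, HasDerivAt r ((Real.sqrt (1 + 2 * r s ^ 2))⁻¹) s) (v : ℝ) :
    HasDerivAt (fun v => Real.sqrt (1 + 2 * r v ^ 2))
      (2 * r v / (1 + 2 * r v ^ 2)) v := by
  have hpos : (0:ℝ) < 1 + 2 * r v ^ 2 := by positivity
  have hS : 0 < Real.sqrt (1 + 2 * r v ^ 2) := Real.sqrt_pos.2 hpos
  have hS2 : Real.sqrt (1 + 2 * r v ^ 2) ^ 2 = 1 + 2 * r v ^ 2 := Real.sq_sqrt hpos.le
  have hc : HasDerivAt (fun v => 1 + 2 * r v ^ 2)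
      (2 * (2 * r v ^ 1 * (Real.sqrt (1 + 2 * r v ^ 2))⁻¹)) v := by
    have := (((hr' v).pow 2).const_mul 2).const_add 1
    simpa using this
  have hsq := (Real.hasDerivAt_sqrt hpos.ne').comp v hc
  refine hsq.congr_deriv ?_
  symm
  field_simp
  linear_combination (r v) * hS2

lemma key_deriv_aux (r : ℝ → ℝ)
    (hr' : ∀ s : ℝ, HasDerivAt r ((Real.sqrt (1 + 2 * r s ^ 2))⁻¹) s) (v : ℝ) :
    HasDerivAt (fun v => r v * (1 + 2 * r v ^ 2) * Real.sqrt (1 + 2 * r v ^ 2) - v)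
      (8 * r v ^ 2) v := by
  have hpos : (0:ℝ) < 1 + 2 * r v ^ 2 := by positivity
  have hS : 0 < Real.sqrt (1 + 2 * r v ^ 2) := Real.sqrt_pos.2 hpos
  have hS2 : Real.sqrt (1 + 2 * r v ^ 2) ^ 2 = 1 + 2 * r v ^ 2 := Real.sq_sqrt hpos.le
  have hc : HasDerivAt (fun v => 1 + 2 * r v ^ 2)
      (2 * (2 * r v ^ 1 * (Real.sqrt (1 + 2 * r v ^ 2))⁻¹)) v := by
    have := (((hr' v).pow 2).const_mul 2).const_add 1
    simpa using this
  have ha := (hr' v).mul hc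
  have hb := ha.mul (sqrt_deriv_aux r hr' v)
  have hh := hb.sub (hasDerivAt_id v)
  refine hh.congr_deriv ?_
  symm
  field_simp
  simp only [Pi.mul_apply]
  nlinarith [hS, hS2]

lemma key_ineq_s11 (r : ℝ → ℝ) (hr0 : r 0 = 0)
    (hr' : ∀ s : ℝ, HasDerivAt r ((Real.sqrt (1 + 2 * r s ^ 2))⁻¹) s)
    {v : ℝ} (hv : 0 < v) :
    v < r v * (1 + 2 * r v ^ 2) * Real.sqrt (1 + 2 * r v ^ 2) := by
  have hrmono : StrictMono r := by
    apply strictMono_of_deriv_pos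
    intro x
    rw [(hr' x).deriv]
    exact inv_pos.2 (Real.sqrt_pos.2 (by positivity))
  have hrpos : ∀ x : ℝ, 0 < x → 0 < r x := fun x hx => hr0 ▸ hrmono hx
  set h : ℝ → ℝ := fun v => r v * (1 + 2 * r v ^ 2) * Real.sqrt (1 + 2 * r v ^ 2) - v
    with hhdef
  have hmono : StrictMonoOn h (Set.Ici 0) := by
    apply strictMonoOn_of_deriv_pos (convex_Ici 0)
    · exact (Differentiable.continuous fun x =>
        (key_deriv_aux r hr' x).differentiableAt).continuousOn
    · intro x hx
      rw [interior_Ici] at hx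
      rw [(key_deriv_aux r hr' x).deriv]
      have := hrpos x hx
      positivity
  have h0 : h 0 = 0 := by simp [hhdef, hr0]
  have := hmono Set.self_mem_Ici (le_of_lt hv) hv
  rw [h0] at this
  have : 0 < r v * (1 + 2 * r v ^ 2) * Real.sqrt (1 + 2 * r v ^ 2) - v := this
  linarith

/-- The map `v ↦ r(v)/(v √(1 + 2 r(v)²))` is decreasing on `(0, +∞)`. -/
theorem r_div_decreasing (r : ℝ → ℝ) (hr0 : r 0 = 0)
    (hr' : ∀ s : ℝ, HasDerivAt r ((Real.sqrt (1 + 2 * r s ^ 2))⁻¹) s) :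
    StrictAntiOn (fun v => r v / (v * Real.sqrt (1 + 2 * r v ^ 2))) (Set.Ioi (0:ℝ)) := by
  have hSpos : ∀ x : ℝ, 0 < Real.sqrt (1 + 2 * r x ^ 2) :=
    fun x => Real.sqrt_pos.2 (by positivity)
  have hrc : Continuous r := Differentiable.continuous fun x => (hr' x).differentiableAt
  have hSc : Continuous (fun v => Real.sqrt (1 + 2 * r v ^ 2)) :=
    Differentiable.continuous fun x => (sqrt_deriv_aux r hr' x).differentiableAt
  apply strictAntiOn_of_deriv_neg (convex_Ioi 0)
  · exact hrc.continuousOn.div ((continuous_id.mul hSc).continuousOn)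
      (fun x hx => (mul_pos (Set.mem_Ioi.1 hx) (hSpos x)).ne')
  · intro x hx
    rw [interior_Ioi] at hx
    have hxpos : (0:ℝ) < x := hx
    have hpos : (0:ℝ) < 1 + 2 * r x ^ 2 := by positivity
    have hS := hSpos x
    have hS2 : Real.sqrt (1 + 2 * r x ^ 2) ^ 2 = 1 + 2 * r x ^ 2 := Real.sq_sqrt hpos.le
    have hden : HasDerivAt (fun v => v * Real.sqrt (1 + 2 * r v ^ 2))
        (1 * Real.sqrt (1 + 2 * r x ^ 2) + x * (2 * r x / (1 + 2 * r x ^ 2))) x :=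
      (hasDerivAt_id x).mul (sqrt_deriv_aux r hr' x)
    have hne : x * Real.sqrt (1 + 2 * r x ^ 2) ≠ 0 := (mul_pos hxpos hS).ne'
    have hf : HasDerivAt (fun v => r v / (v * Real.sqrt (1 + 2 * r v ^ 2))) _ x :=
      (hr' x).div hden hne
    rw [hf.deriv]
    apply div_neg_of_neg_of_pos
    · have hkey := key_ineq_s11 r hr0 hr' hxpos
      have hNe : (Real.sqrt (1 + 2 * r x ^ 2))⁻¹ * (x * Real.sqrt (1 + 2 * r x ^ 2)) -
          r x * (1 * Real.sqrt (1 + 2 * r x ^ 2) + x * (2 * r x / (1 + 2 * r x ^ 2))) =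
          (x - r x * (1 + 2 * r x ^ 2) * Real.sqrt (1 + 2 * r x ^ 2)) / (1 + 2 * r x ^ 2) := by
        field_simp
        ring_nf
      rw [hNe]
      exact div_neg_of_neg_of_pos (by linarith) hpos
    · positivity
end

section
/- For every real exponent p ≥ 3, the map v ↦ r(v)^p / (v · √(1 + 2 r(v)²)) is increasing on (0, +∞). -/
/-- For every real exponent `p ≥ 3`, the map `v ↦ r(v)^p/(v √(1 + 2 r(v)²))`
is increasing on `(0, +∞)`. -/
theorem r_pow_div_increasing (r : ℝ → ℝ) (hr0 : r 0 = 0)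
    (hr' : ∀ s : ℝ, HasDerivAt r ((Real.sqrt (1 + 2 * r s ^ 2))⁻¹) s)
    (p : ℝ) (hp : 3 ≤ p) :
    StrictMonoOn (fun v => r v ^ p / (v * Real.sqrt (1 + 2 * r v ^ 2))) (Set.Ioi (0:ℝ)) := by
  set S : ℝ → ℝ := fun v => Real.sqrt (1 + 2 * r v ^ 2) with hSdef
  have hQpos : ∀ v, (0:ℝ) < 1 + 2 * r v ^ 2 := fun v => by positivity
  have hSpos : ∀ v, 0 < S v := fun v => Real.sqrt_pos.2 (hQpos v)
  have hSsq : ∀ v, S v ^ 2 = 1 + 2 * r v ^ 2 := fun v => Real.sq_sqrt (hQpos v).le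
  have hSS : ∀ v, Real.sqrt (1 + 2 * r v ^ 2) = S v := fun v => rfl
  -- derivative of S
  have hS' : ∀ v, HasDerivAt S (2 * r v / (1 + 2 * r v ^ 2)) v := by
    intro v
    have h1 : HasDerivAt (fun v => 1 + 2 * r v ^ 2)
        (2 * (2 * r v ^ 1 * (S v)⁻¹)) v :=
      (((hr' v).pow 2).const_mul 2).const_add 1
    have h2 := h1.sqrt (ne_of_gt (hQpos v))
    convert h2 using 1
    rw [hSS, pow_one, ← hSsq v]
    have hne : S v ≠ 0 := (hSpos v).ne'
    field_simp
  -- r is strictly monotone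
  have hrmono : StrictMono r := by
    apply strictMono_of_deriv_pos
    intro v; rw [(hr' v).deriv]; exact inv_pos.2 (hSpos v)
  have hrpos : ∀ v : ℝ, 0 < v → 0 < r v := fun v hv => by
    have := hrmono hv; rwa [hr0] at this
  -- key inequality r v * S v < 2 v for v > 0
  have hkey : ∀ v : ℝ, 0 < v → r v * S v < 2 * v := by
    intro v hv
    have hGmono : StrictMono (fun v => 2 * v - r v * S v) := by
      apply strictMono_of_deriv_pos
      intro w
      have hG' : HasDerivAt (fun v => 2 * v - r v * S v) ((1 + 2 * r w ^ 2)⁻¹) w := by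
        have h : HasDerivAt (fun v => 2 * v - r v * S v) _ w :=
          ((hasDerivAt_id w).const_mul 2).sub ((hr' w).mul (hS' w))
        convert h using 1
        rw [hSS, ← hSsq w]
        have hne : S w ≠ 0 := (hSpos w).ne'
        field_simp
        rw [hSsq w]; ring
      rw [hG'.deriv]
      exact inv_pos.2 (hQpos w)
    have h := hGmono hv
    simp only [hr0, mul_zero, sub_zero, zero_mul] at h
    linarith
  -- continuity
  have hrcont : Continuous r :=
    continuous_iff_continuousAt.2 fun v => (hr' v).continuousAt
  have hScont : Continuous S :=
    continuous_iff_continuousAt.2 fun v => (hS' v).continuousAt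
  have hcont : ContinuousOn (fun v => r v ^ p / (v * S v)) (Set.Ioi (0:ℝ)) := by
    apply ContinuousOn.div
    · exact (hrcont.rpow_const (fun x => Or.inr (by linarith))).continuousOn
    · exact (continuous_id.mul hScont).continuousOn
    · intro v hv
      exact (mul_pos (Set.mem_Ioi.1 hv) (hSpos v)).ne'
  apply strictMonoOn_of_deriv_pos (convex_Ioi 0) hcont
  rw [interior_Ioi]
  intro v hv
  rw [Set.mem_Ioi] at hv
  have hR : 0 < r v := hrpos v hv
  have hne : v * S v ≠ 0 := (mul_pos hv (hSpos v)).ne'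
  have hnum : HasDerivAt (fun v => r v ^ p) ((S v)⁻¹ * p * r v ^ (p - 1)) v :=
    (hr' v).rpow_const (Or.inr (by linarith))
  have hden : HasDerivAt (fun v => v * S v) (1 * S v + v * (2 * r v / (1 + 2 * r v ^ 2))) v :=
    (hasDerivAt_id v).mul (hS' v)
  have hf : HasDerivAt (fun v => r v ^ p / (v * S v)) _ v := hnum.div hden hne
  rw [hf.deriv]
  apply div_pos _ (pow_pos (mul_pos hv (hSpos v)) 2)
  have hA : (0:ℝ) < r v ^ (p - 1) := Real.rpow_pos_of_pos hR _
  have hRp : r v ^ p = r v ^ (p - 1) * r v := by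
    have h1 : p - 1 + 1 = p := by ring
    have h2 := Real.rpow_add_one hR.ne' (p - 1)
    rw [h1] at h2
    exact h2
  have e1 : (S v)⁻¹ * p * r v ^ (p - 1) * (v * S v) = p * r v ^ (p - 1) * v := by
    field_simp [(hSpos v).ne']
  rw [hRp, e1, one_mul]
  have hkv := hkey v hv
  have hq : 2 * v * r v ^ 2 / (1 + 2 * r v ^ 2) < v := by
    rw [div_lt_iff₀ (hQpos v)]; nlinarith
  have expand : p * r v ^ (p - 1) * v
      - r v ^ (p - 1) * r v * (S v + v * (2 * r v / (1 + 2 * r v ^ 2)))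
      = r v ^ (p - 1) * ((p * v - r v * S v) - 2 * v * r v ^ 2 / (1 + 2 * r v ^ 2)) := by
    field_simp
    ring
  rw [expand]
  apply mul_pos hA
  nlinarith [hq, hkv, mul_nonneg (sub_nonneg.2 hp) hv.le]
end

section
/- If p ≥ 3 and V ≥ 0, then the map v ↦ f(v)/v is increasing on (0, +∞). -/
set_option maxHeartbeats 1000000 in
/-- If `p ≥ 3` and `V ≥ 0`, then `v ↦ f(v)/v` is increasing on `(0, +∞)`, where
`f(v) = (|r(v)|^{p-1} r(v) - V r(v))/√(1 + 2 r(v)²)`. -/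
theorem f_div_v_increasing (r : ℝ → ℝ) (hr0 : r 0 = 0)
    (hr' : ∀ s : ℝ, HasDerivAt r ((Real.sqrt (1 + 2 * r s ^ 2))⁻¹) s)
    (p V : ℝ) (hp : 3 ≤ p) (hV : 0 ≤ V)
    (f : ℝ → ℝ)
    (hf : ∀ v : ℝ, f v =
      (|r v| ^ (p - 1) * r v - V * r v) / Real.sqrt (1 + 2 * r v ^ 2)) :
    StrictMonoOn (fun v => f v / v) (Set.Ioi (0:ℝ)) := by
  set S : ℝ → ℝ := fun v => Real.sqrt (1 + 2 * r v ^ 2) with hS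
  have hargpos : ∀ v, (0:ℝ) < 1 + 2 * r v ^ 2 := fun v => by positivity
  have hSsq : ∀ v, S v ^ 2 = 1 + 2 * r v ^ 2 := fun v => Real.sq_sqrt (hargpos v).le
  have hS1 : ∀ v, 1 ≤ S v := fun v => Real.one_le_sqrt.mpr (by nlinarith [sq_nonneg (r v)])
  have hSpos : ∀ v, 0 < S v := fun v => lt_of_lt_of_le one_pos (hS1 v)
  have hSne : ∀ v, S v ≠ 0 := fun v => (hSpos v).ne'
  -- derivative of S
  have hS' : ∀ v, HasDerivAt S (2 * r v / S v ^ 2) v := by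
    intro v
    have h1 : HasDerivAt (fun v => 1 + 2 * r v ^ 2)
        (2 * (2 * r v ^ 1 * (S v)⁻¹)) v := (((hr' v).pow 2).const_mul 2).const_add 1
    have := h1.sqrt (hargpos v).ne'
    convert this using 1
    rw [show Real.sqrt (1 + 2 * r v ^ 2) = S v from rfl, pow_one]
    have hne := hSne v
    field_simp
  -- r is strictly monotone, hence positive on Ioi 0
  have hrmono : StrictMono r := by
    apply strictMono_of_deriv_pos
    intro v
    rw [(hr' v).deriv]
    positivity
  have hrpos : ∀ v > (0:ℝ), 0 < r v := fun v hv => hr0 ▸ hrmono hv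
  -- derivative of r * S
  have hRS' : ∀ v, HasDerivAt (fun v => r v * S v)
      ((S v)⁻¹ * S v + r v * (2 * r v / S v ^ 2)) v := fun v => (hr' v).mul (hS' v)
  -- inequality I1 : v ≤ r v * S v for v ≥ 0
  have hI1 : ∀ v, 0 ≤ v → v ≤ r v * S v := by
    intro v hv
    have hg : ∀ x, HasDerivAt (fun x => r x * S x - x)
        ((S x)⁻¹ * S x + r x * (2 * r x / S x ^ 2) - 1) x :=
      fun x => (hRS' x).sub (hasDerivAt_id x)
    have hmono : Monotone (fun x => r x * S x - x) := by
      apply monotone_of_deriv_nonneg (fun x => (hg x).differentiableAt)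
      intro x
      rw [(hg x).deriv, inv_mul_cancel₀ (hSne x)]
      have h3 := hSpos x
      have h4 : r x * (2 * r x / S x ^ 2) = 2 * r x ^ 2 / S x ^ 2 := by ring
      have h5 : 0 ≤ 2 * r x ^ 2 / S x ^ 2 := by positivity
      linarith
    have := hmono hv
    simp only [hr0, zero_mul, sub_zero, zero_sub, neg_nonpos] at this
    simpa [hr0] using this
  -- inequality I2 : r v * S v ≤ 2 v for v ≥ 0
  have hI2 : ∀ v, 0 ≤ v → r v * S v ≤ 2 * v := by
    intro v hv
    have hg : ∀ x, HasDerivAt (fun x => 2 * x - r x * S x)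
        (2 * 1 - ((S x)⁻¹ * S x + r x * (2 * r x / S x ^ 2))) x :=
      fun x => ((hasDerivAt_id x).const_mul 2).sub (hRS' x)
    have hmono : Monotone (fun x => 2 * x - r x * S x) := by
      apply monotone_of_deriv_nonneg (fun x => (hg x).differentiableAt)
      intro x
      rw [(hg x).deriv, inv_mul_cancel₀ (hSne x)]
      have h2 := hSsq x
      have h3 := hSpos x
      have : r x * (2 * r x / S x ^ 2) = 2 * r x ^ 2 / S x ^ 2 := by ring
      rw [this, h2]
      rw [sub_nonneg]
      have : 2 * r x ^ 2 / (1 + 2 * r x ^ 2) ≤ 1 := by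
        rw [div_le_one (hargpos x)]; nlinarith [sq_nonneg (r x)]
      linarith
    have := hmono hv
    simpa [hr0] using this
  -- the derivative of f v / v at each point of Ioi 0
  have key : ∀ v ∈ Set.Ioi (0:ℝ), HasDerivAt (fun v => f v / v)
      ((((S v)⁻¹ * (p-1) * r v ^ (p-1-1) * r v + r v ^ (p-1) * (S v)⁻¹
          - V * (S v)⁻¹) * (S v * v)
        - (r v ^ (p-1) * r v - V * r v) * (2 * r v / S v ^ 2 * v + S v * 1))
        / (S v * v) ^ 2) v := by
    intro v hv
    simp only [Set.mem_Ioi] at hv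
    have hR : 0 < r v := hrpos v hv
    have hu : HasDerivAt (fun v => r v ^ (p-1) * r v - V * r v)
        ((S v)⁻¹ * (p-1) * r v ^ (p-1-1) * r v + r v ^ (p-1) * (S v)⁻¹
          - V * (S v)⁻¹) v :=
      (((hr' v).rpow_const (Or.inl hR.ne')).mul (hr' v)).sub ((hr' v).const_mul V)
    have hw : HasDerivAt (fun v => S v * v) (2 * r v / S v ^ 2 * v + S v * 1) v :=
      (hS' v).mul (hasDerivAt_id v)
    have hwne : S v * v ≠ 0 := by positivity
    have hdiv := hu.div hw hwne
    apply hdiv.congr_of_eventuallyEq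
    have hev : ∀ᶠ x in nhds v, 0 < r x :=
      (hr' v).continuousAt.eventually (eventually_gt_nhds hR)
    filter_upwards [hev] with x hx
    rw [hf x, abs_of_pos hx, div_div]; rfl
  apply strictMonoOn_of_deriv_pos (convex_Ioi 0)
  · intro v hv
    exact ((key v hv).continuousAt).continuousWithinAt
  · intro v hv
    rw [interior_Ioi] at hv
    rw [(key v hv).deriv]
    have hvpos : (0:ℝ) < v := hv
    have hR : 0 < r v := hrpos v hvpos
    have hi1 := hI1 v hvpos.le
    have hi2 := hI2 v hvpos.le
    have h1 := hS1 v
    have h2 := hSsq v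
    have h3 := hSpos v
    have hA : 0 < r v ^ (p-1) := Real.rpow_pos_of_pos hR _
    have hBA : r v ^ (p-1-1) * r v = r v ^ (p-1) := by
      rw [← Real.rpow_add_one hR.ne']
      congr 1
      ring
    apply div_pos
    · set A := r v ^ (p-1) with hAdef
      set B := r v ^ (p-1-1) with hBdef
      set R := r v with hRdef
      set s := S v with hsdef
      clear_value A B R s
      clear hf hr' key hI1 hI2 hS' hRS' hrmono hrpos hSsq hS1 hSpos hSne hargpos hr0
      have hrw : ((s⁻¹ * (p-1) * B * R + A * s⁻¹ - V * s⁻¹) * (s * v)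
          - (A * R - V * R) * (2 * R / s ^ 2 * v + s * 1))
          = ((p * A - V) * v * s ^ 2 - (A * R - V * R) * (2 * R * v + s * s ^ 2)) / s ^ 2 := by
        field_simp
        linear_combination (p - 1) * s ^ 2 * v * hBA
      rw [hrw]
      apply div_pos _ (by positivity)
      have hEeq : (p*A - V)*v*s^2 - (A*R - V*R)*(2*R*v + s*s^2)
          = A*(v*(p + (2*p-2)*R^2) - R*s*(1+2*R^2))
            + V*(R*s*(1+2*R^2) - v*(1+2*R^2) + 2*R^2*v) := by
        linear_combination ((p*A - V)*v - (A*R - V*R)*s) * h2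
      rw [hEeq]
      have hApart : 0 < A*(v*(p + (2*p-2)*R^2) - R*s*(1+2*R^2)) := by
        apply mul_pos hA
        nlinarith [mul_nonneg (by nlinarith [sq_nonneg R] : (0:ℝ) ≤ p + (2*p-2)*R^2)
            (by linarith : (0:ℝ) ≤ 2*v - R*s),
          mul_pos hR h3,
          mul_nonneg (mul_pos hR h3).le (by nlinarith [sq_nonneg R] : (0:ℝ) ≤ (p-3) + (2*p-6)*R^2)]
      have hVpart : 0 ≤ V*(R*s*(1+2*R^2) - v*(1+2*R^2) + 2*R^2*v) := by
        apply mul_nonneg hV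
        nlinarith [mul_nonneg (by linarith : (0:ℝ) ≤ R*s - v) (by positivity : (0:ℝ) ≤ 1+2*R^2),
          mul_nonneg (sq_nonneg R) hvpos.le]
      linarith
    · positivity
end

section
/- There exists a constant C > 0 such that for all v ≥ 0, |f(v)| ≤ C·(1 + v^{(p−1)/2}). -/
/-- There exists `C > 0` such that `|f(v)| ≤ C (1 + v^{(p-1)/2})` for all `v ≥ 0`. -/
theorem f_growth_bound (r : ℝ → ℝ) (hr0 : r 0 = 0)
    (hr' : ∀ s : ℝ, HasDerivAt r ((Real.sqrt (1 + 2 * r s ^ 2))⁻¹) s)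
    (p V : ℝ) (hp : 1 < p)
    (f : ℝ → ℝ)
    (hf : ∀ v : ℝ, f v =
      (|r v| ^ (p - 1) * r v - V * r v) / Real.sqrt (1 + 2 * r v ^ 2)) :
    ∃ C > (0:ℝ), ∀ v : ℝ, 0 ≤ v → |f v| ≤ C * (1 + v ^ ((p - 1) / 2)) := by
  have hq0 : 0 ≤ (p - 1) / 2 := by linarith
  have hs2 : Real.sqrt 2 ≤ 2 := by
    nlinarith [Real.sq_sqrt (by norm_num : (0:ℝ) ≤ 2), Real.sqrt_nonneg 2]
  refine ⟨|V| + 2 ^ ((p - 1) / 2) + 1, by positivity, ?_⟩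
  intro v hv
  -- derivative bound for r^2
  have hderiv : ∀ s, HasDerivAt (fun t => r t ^ 2)
      (2 * r s * (Real.sqrt (1 + 2 * r s ^ 2))⁻¹) s := by
    intro s
    have := (hr' s).pow 2
    show HasDerivAt (r ^ 2) _ s
    simpa [mul_comm, mul_assoc, mul_left_comm] using this
  have hbound : ∀ s, ‖2 * r s * (Real.sqrt (1 + 2 * r s ^ 2))⁻¹‖ ≤ Real.sqrt 2 := by
    intro s
    have hpos : (0:ℝ) < Real.sqrt (1 + 2 * r s ^ 2) :=
      Real.sqrt_pos.2 (by positivity)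
    rw [Real.norm_eq_abs, abs_mul, abs_inv, abs_of_pos hpos,
      ← div_eq_mul_inv, div_le_iff₀ hpos]
    · have h1 : |2 * r s| = Real.sqrt (4 * r s ^ 2) := by
        rw [show (4 : ℝ) * r s ^ 2 = (2 * r s) ^ 2 by ring, Real.sqrt_sq_eq_abs]
      have h2 : Real.sqrt 2 * Real.sqrt (1 + 2 * r s ^ 2)
          = Real.sqrt (2 * (1 + 2 * r s ^ 2)) := by
        rw [← Real.sqrt_mul (by norm_num)]
      rw [h1, h2]
      exact Real.sqrt_le_sqrt (by nlinarith)
  -- r v ^ 2 ≤ √2 * v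
  have hsq : r v ^ 2 ≤ Real.sqrt 2 * v := by
    have := norm_image_sub_le_of_norm_deriv_le_segment'
      (f := fun t => r t ^ 2) (a := 0) (b := v)
      (f' := fun s => 2 * r s * (Real.sqrt (1 + 2 * r s ^ 2))⁻¹)
      (fun x _ => (hderiv x).hasDerivWithinAt)
      (fun x _ => hbound x) v (Set.right_mem_Icc.2 hv)
    have h' : |r v ^ 2 - r 0 ^ 2| ≤ Real.sqrt 2 * (v - 0) := this
    rw [hr0] at h'
    simp only [sub_zero] at h'
    nlinarith [le_abs_self (r v ^ 2 - 0 ^ 2)]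
  -- |r v| ^ (p-1) ≤ 2 ^ ((p-1)/2) * v ^ ((p-1)/2)
  have hr_pow : |r v| ^ (p - 1) ≤ 2 ^ ((p - 1) / 2) * v ^ ((p - 1) / 2) := by
    have h1 : |r v| ≤ Real.sqrt (Real.sqrt 2 * v) := by
      rw [← Real.sqrt_sq_eq_abs]
      exact Real.sqrt_le_sqrt hsq
    have h2 : |r v| ^ (p - 1) ≤ Real.sqrt (Real.sqrt 2 * v) ^ (p - 1) :=
      Real.rpow_le_rpow (abs_nonneg _) h1 (by linarith)
    have h3 : Real.sqrt (Real.sqrt 2 * v) ^ (p - 1)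
        = (Real.sqrt 2 * v) ^ ((p - 1) / 2) := by
      rw [Real.sqrt_eq_rpow, ← Real.rpow_mul (by positivity)]
      congr 1
      ring
    have h4 : (Real.sqrt 2 * v) ^ ((p - 1) / 2) ≤ (2 * v) ^ ((p - 1) / 2) :=
      Real.rpow_le_rpow (by positivity)
        (mul_le_mul_of_nonneg_right hs2 hv) hq0
    have h5 : ((2:ℝ) * v) ^ ((p - 1) / 2)
        = 2 ^ ((p - 1) / 2) * v ^ ((p - 1) / 2) :=
      Real.mul_rpow (by norm_num) hv
    calc |r v| ^ (p - 1) ≤ (Real.sqrt 2 * v) ^ ((p - 1) / 2) := h3 ▸ h2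
    _ ≤ 2 ^ ((p - 1) / 2) * v ^ ((p - 1) / 2) := h5 ▸ h4
  -- denominator bounds
  have hS1 : (1:ℝ) ≤ Real.sqrt (1 + 2 * r v ^ 2) := by
    calc (1:ℝ) = Real.sqrt 1 := by simp
    _ ≤ _ := Real.sqrt_le_sqrt (by nlinarith)
  have hS0 : (0:ℝ) < Real.sqrt (1 + 2 * r v ^ 2) := lt_of_lt_of_le one_pos hS1
  have hrS : |r v| ≤ Real.sqrt (1 + 2 * r v ^ 2) := by
    rw [← Real.sqrt_sq_eq_abs]
    exact Real.sqrt_le_sqrt (by nlinarith)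
  -- bound |f v|
  have hfv : |f v| ≤ |r v| ^ (p - 1) + |V| := by
    rw [hf v, abs_div, abs_of_pos hS0, div_le_iff₀ hS0]
    have htr : |(|r v| ^ (p - 1) * r v - V * r v)|
        ≤ |r v| ^ (p - 1) * |r v| + |V| * |r v| := by
      calc |(|r v| ^ (p - 1) * r v - V * r v)|
          ≤ |(|r v| ^ (p - 1) * r v)| + |V * r v| := abs_sub _ _
      _ = |r v| ^ (p - 1) * |r v| + |V| * |r v| := by
          rw [abs_mul, abs_mul, abs_of_nonneg (Real.rpow_nonneg (abs_nonneg _) _)]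
    have hpw : (0:ℝ) ≤ |r v| ^ (p - 1) := Real.rpow_nonneg (abs_nonneg _) _
    nlinarith [abs_nonneg (r v), abs_nonneg V]
  have hvq : (0:ℝ) ≤ v ^ ((p - 1) / 2) := Real.rpow_nonneg hv _
  have h2q : (0:ℝ) < (2:ℝ) ^ ((p - 1) / 2) := Real.rpow_pos_of_pos (by norm_num) _
  nlinarith [abs_nonneg V]
end

section
/- If p > 3, then F(v)/v² → +∞ as v → +∞, where F(v) := ∫₀ᵛ f(s) ds. -/
open Filter

/-- If `p > 3` then `F(v)/v² → +∞` as `v → +∞`, where `F(v) = ∫₀ᵛ f`. -/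
theorem F_superquadratic (r : ℝ → ℝ) (hr0 : r 0 = 0)
    (hr' : ∀ s : ℝ, HasDerivAt r ((Real.sqrt (1 + 2 * r s ^ 2))⁻¹) s)
    (p V : ℝ) (hp : 3 < p)
    (f : ℝ → ℝ)
    (hf : ∀ v : ℝ, f v =
      (|r v| ^ (p - 1) * r v - V * r v) / Real.sqrt (1 + 2 * r v ^ 2)) :
    Tendsto (fun v => (∫ s in (0:ℝ)..v, f s) / v ^ 2) atTop atTop := by
  have hsq : ∀ s : ℝ, 0 < Real.sqrt (1 + 2 * r s ^ 2) := fun s =>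
    Real.sqrt_pos.mpr (by positivity)
  have hdiff : Differentiable ℝ r := fun s => (hr' s).differentiableAt
  have hrc : Continuous r := hdiff.continuous
  have hr'c : Continuous (fun s => (Real.sqrt (1 + 2 * r s ^ 2))⁻¹) := by
    apply Continuous.inv₀
    · exact (continuous_const.add (continuous_const.mul (hrc.pow 2))).sqrt
    · exact fun s => ne_of_gt (hsq s)
  have hmono : StrictMono r := by
    apply strictMono_of_deriv_pos
    intro s
    rw [(hr' s).deriv]
    exact inv_pos.mpr (hsq s)
  have hrnonneg : ∀ v : ℝ, 0 ≤ v → 0 ≤ r v := by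
    intro v hv
    rw [← hr0]
    exact hmono.le_iff_le.mpr hv
  -- r v ≤ v for v ≥ 0
  have hle : ∀ v : ℝ, 0 ≤ v → r v ≤ v := by
    have hm : Monotone (fun s : ℝ => s - r s) := by
      apply monotone_of_deriv_nonneg
      · exact differentiable_id.sub hdiff
      · intro s
        have hD : HasDerivAt (fun s : ℝ => s - r s)
            (1 - (Real.sqrt (1 + 2 * r s ^ 2))⁻¹) s := (hasDerivAt_id s).sub (hr' s)
        rw [hD.deriv]
        have h1 : (1:ℝ) ≤ Real.sqrt (1 + 2 * r s ^ 2) := by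
          nlinarith [Real.sq_sqrt (show (0:ℝ) ≤ 1 + 2 * r s ^ 2 by positivity),
            Real.sqrt_nonneg (1 + 2 * r s ^ 2), sq_nonneg (r s)]
        have := inv_le_one_of_one_le₀ h1
        linarith
    intro v hv
    have := hm hv
    simp only [hr0, sub_zero] at this
    linarith
  -- growth: for v ≥ 2, r v ^ 2 ≥ v / 2
  have hs2 : (0:ℝ) < Real.sqrt 2 := Real.sqrt_pos.mpr (by norm_num)
  have hs2sq : Real.sqrt 2 ^ 2 = 2 := Real.sq_sqrt (by norm_num)
  have hgrow : ∀ v : ℝ, 2 ≤ v → v / 2 ≤ r v ^ 2 := by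
    have hm : MonotoneOn (fun s => r s + r s ^ 2 * (Real.sqrt 2)⁻¹ - s) (Set.Ici (0:ℝ)) := by
      apply monotoneOn_of_deriv_nonneg (convex_Ici 0)
      · exact ((hrc.add ((hrc.pow 2).mul continuous_const)).sub continuous_id).continuousOn
      · intro s _
        have hD : DifferentiableAt ℝ (fun s => r s + r s ^ 2 * (Real.sqrt 2)⁻¹ - s) s :=
          ((hdiff s).add (((hdiff s).pow 2).mul_const _)).sub differentiableAt_id
        exact hD.differentiableWithinAt
      · intro s hs
        rw [interior_Ici] at hs
        have hrs : 0 ≤ r s := hrnonneg s (le_of_lt hs)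
        have hd : HasDerivAt (fun s => r s + r s ^ 2 * (Real.sqrt 2)⁻¹ - s)
            ((Real.sqrt (1 + 2 * r s ^ 2))⁻¹ +
              2 * r s ^ 1 * (Real.sqrt (1 + 2 * r s ^ 2))⁻¹ * (Real.sqrt 2)⁻¹ - 1) s :=
          ((hr' s).add (((hr' s).pow 2).mul_const _)).sub (hasDerivAt_id s)
        rw [hd.deriv]
        have hSpos := hsq s
        have hS : Real.sqrt (1 + 2 * r s ^ 2) ≤ 1 + Real.sqrt 2 * r s := by
          rw [show 1 + Real.sqrt 2 * r s = Real.sqrt ((1 + Real.sqrt 2 * r s) ^ 2) by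
            rw [Real.sqrt_sq (by positivity)]]
          apply Real.sqrt_le_sqrt
          nlinarith
        have e : (Real.sqrt (1 + 2 * r s ^ 2))⁻¹ +
            2 * r s ^ 1 * (Real.sqrt (1 + 2 * r s ^ 2))⁻¹ * (Real.sqrt 2)⁻¹ =
            (1 + Real.sqrt 2 * r s) / Real.sqrt (1 + 2 * r s ^ 2) := by
          rw [eq_div_iff (ne_of_gt hSpos)]
          field_simp
          nlinarith [hs2sq, mul_nonneg hrs hSpos.le, hSpos]
        rw [sub_nonneg, e, le_div_iff₀ hSpos]
        linarith
    intro v hv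
    have h0v : (0:ℝ) ≤ v := by linarith
    have := hm (Set.self_mem_Ici) (Set.mem_Ici.mpr h0v) h0v
    simp only [hr0] at this
    have hx : 0 ≤ r v := hrnonneg v h0v
    have key : v ≤ r v + r v ^ 2 * (Real.sqrt 2)⁻¹ := by
      norm_num at this; linarith
    have hinv2 : (Real.sqrt 2)⁻¹ ≤ 1 := by
      apply inv_le_one_of_one_le₀
      nlinarith [Real.sq_sqrt (show (0:ℝ) ≤ 2 by norm_num), Real.sqrt_nonneg 2]
    have hinv2' : 0 < (Real.sqrt 2)⁻¹ := inv_pos.mpr hs2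
    have hone : 1 ≤ r v := by
      by_contra h
      push_neg at h
      nlinarith
    nlinarith
  -- compute F(v) for v ≥ 0
  have hg : Continuous (fun t : ℝ => |t| ^ (p - 1) * t - V * t) := by
    apply Continuous.sub
    · exact (continuous_abs.rpow_const (fun x => Or.inr (by linarith))).mul continuous_id
    · exact continuous_const.mul continuous_id
  have key : ∀ v : ℝ, 0 ≤ v →
      (∫ s in (0:ℝ)..v, f s) = r v ^ (p + 1) / (p + 1) - V * r v ^ 2 / 2 := by
    intro v hv
    have hsub : (∫ s in (0:ℝ)..v, f s) =
        ∫ t in (r 0)..(r v), (|t| ^ (p - 1) * t - V * t) := by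
      rw [← intervalIntegral.integral_comp_smul_deriv (fun s _ => hr' s)
        hr'c.continuousOn hg]
      apply intervalIntegral.integral_congr
      intro s _
      rw [hf s]
      simp only [Function.comp, smul_eq_mul]
      rw [div_eq_inv_mul]
    rw [hsub, hr0]
    have hx : 0 ≤ r v := hrnonneg v hv
    have h1 : (∫ t in (0:ℝ)..(r v), (|t| ^ (p - 1) * t - V * t)) =
        ∫ t in (0:ℝ)..(r v), (t ^ p - V * t) := by
      apply intervalIntegral.integral_congr
      intro t ht
      show |t| ^ (p - 1) * t - V * t = t ^ p - V * t
      rw [Set.uIcc_of_le hx] at ht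
      have ht0 : 0 ≤ t := ht.1
      rw [abs_of_nonneg ht0]
      rcases eq_or_lt_of_le ht0 with h | h
      · rw [← h, Real.zero_rpow (by linarith : p - 1 ≠ 0),
          Real.zero_rpow (by linarith : p ≠ 0)]
        ring
      · rw [Real.rpow_sub h, Real.rpow_one, div_mul_cancel₀ _ (ne_of_gt h)]
    rw [h1]
    have hint1 : IntervalIntegrable (fun t : ℝ => t ^ p) MeasureTheory.volume 0 (r v) :=
      (continuous_id.rpow_const (fun x => Or.inr (by linarith))).intervalIntegrable _ _
    have hint2 : IntervalIntegrable (fun t : ℝ => V * t) MeasureTheory.volume 0 (r v) :=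
      (continuous_const.mul continuous_id).intervalIntegrable _ _
    rw [intervalIntegral.integral_sub hint1 hint2,
      integral_rpow (Or.inl (by linarith)),
      intervalIntegral.integral_const_mul, integral_id,
      Real.zero_rpow (by linarith : p + 1 ≠ 0)]
    ring
  -- lower bound function
  set q : ℝ := (p + 1) / 2 with hq
  have hq2 : 0 < q - 2 := by rw [hq]; linarith
  have hB : Tendsto (fun v : ℝ => v ^ (q - 2) * ((2:ℝ) ^ (-q) / (p + 1)) - |V| / 2)
      atTop atTop := by
    apply tendsto_atTop_add_const_right
    apply Tendsto.atTop_mul_const (by positivity)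
    exact tendsto_rpow_atTop hq2
  apply tendsto_atTop_mono' _ _ hB
  filter_upwards [eventually_ge_atTop (2:ℝ)] with v hv
  have h0v : (0:ℝ) ≤ v := by linarith
  have hvpos : (0:ℝ) < v := by linarith
  rw [key v h0v]
  have hx : 0 ≤ r v := hrnonneg v h0v
  have hxv : r v ≤ v := hle v h0v
  have hxv2 : r v ^ 2 ≤ v ^ 2 := by nlinarith
  have hg2 : v / 2 ≤ r v ^ 2 := hgrow v hv
  have hp1 : (0:ℝ) < p + 1 := by linarith
  have hv2 : (0:ℝ) < v ^ 2 := by positivity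
  -- r v ^ (p+1) ≥ (v/2)^q
  have hpow : (v / 2) ^ q ≤ r v ^ (p + 1) := by
    have h2q : r v ^ (p + 1) = (r v ^ 2) ^ q := by
      rw [← Real.rpow_natCast (r v) 2, ← Real.rpow_mul hx]
      norm_num [hq]
      ring_nf
    rw [h2q]
    exact Real.rpow_le_rpow (by positivity) hg2 (by rw [hq]; linarith)
  have hvnat : v ^ (2:ℝ) = v ^ 2 := by
    rw [← Real.rpow_natCast v 2]; norm_num
  have hv2q : v ^ (q - 2) * v ^ (2:ℝ) = v ^ q := by
    rw [← Real.rpow_add hvpos]; ring_nf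
  have hrw : (v / 2) ^ q = v ^ (q - 2) * (2:ℝ) ^ (-q) * v ^ 2 := by
    rw [Real.div_rpow h0v (by norm_num : (0:ℝ) ≤ 2),
      Real.rpow_neg (by norm_num : (0:ℝ) ≤ 2), ← hvnat, ← hv2q]
    ring
  have hA1 : v ^ (q - 2) * (2:ℝ) ^ (-q) * v ^ 2 ≤ r v ^ (p + 1) := hrw ▸ hpow
  have hA2 : V * r v ^ 2 ≤ |V| * v ^ 2 := by
    have h1 : V * r v ^ 2 ≤ |V| * r v ^ 2 := by
      nlinarith [le_abs_self V, sq_nonneg (r v)]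
    have h2 : |V| * r v ^ 2 ≤ |V| * v ^ 2 := by
      nlinarith [abs_nonneg V]
    linarith
  rw [le_div_iff₀ hv2]
  have e1 : (v ^ (q - 2) * ((2:ℝ) ^ (-q) / (p + 1)) - |V| / 2) * v ^ 2 =
      (v ^ (q - 2) * (2:ℝ) ^ (-q) * v ^ 2) / (p + 1) - |V| * v ^ 2 / 2 := by
    ring
  rw [e1]
  exact sub_le_sub ((div_le_div_iff_of_pos_right hp1).mpr hA1) ((div_le_div_iff_of_pos_right two_pos).mpr hA2)
end

section
/- Let N ≥ 1, let p > 1 and V : ℝᴺ → ℝ be continuous, and let v : ℝᴺ → ℝ be a C² function satisfying −Δv(x) = (|r(v(x))|^{p−1} r(v(x)) − V(x) r(v(x)))/√(1 + 2 r(v(x))²) for all x ∈ ℝᴺ. Then u := r ∘ v is of class C² and satisfies the quasi-linear equation −Δu(x) − u(x)·Δ(u²)(x) + V(x)·u(x) = |u(x)|^{p−1} u(x) for all x ∈ ℝᴺ, where Δ denotes the Laplacian (the sum of the second partial derivatives with respect to an orthonormal basis of ℝᴺ). -/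
noncomputable def laplacian {N : ℕ} (f : EuclideanSpace ℝ (Fin N) → ℝ)
    (x : EuclideanSpace ℝ (Fin N)) : ℝ :=
  ∑ i : Fin N,
    fderiv ℝ (fun y => fderiv ℝ f y (EuclideanSpace.single i 1)) x (EuclideanSpace.single i 1)

private lemma aux_second {E : Type*} [NormedAddCommGroup E] [NormedSpace ℝ E]
    (φ φ' φ'' : ℝ → ℝ) (hφ' : ∀ s, HasDerivAt φ (φ' s) s)
    (hφ'' : ∀ s, HasDerivAt φ' (φ'' s) s)
    (v : E → ℝ) (hv : ContDiff ℝ 2 v) (w : E) (x : E) :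
    fderiv ℝ (fun y => fderiv ℝ (fun z => φ (v z)) y w) x w
      = φ'' (v x) * (fderiv ℝ v x w) ^ 2
        + φ' (v x) * fderiv ℝ (fun y => fderiv ℝ v y w) x w := by
  have hvd : Differentiable ℝ v := hv.differentiable (by norm_num)
  have h1 : ∀ y, fderiv ℝ (fun z => φ (v z)) y = φ' (v y) • fderiv ℝ v y := fun y =>
    ((hφ' (v y)).comp_hasFDerivAt y (hvd y).hasFDerivAt).fderiv
  have h2 : (fun y => fderiv ℝ (fun z => φ (v z)) y w)
      = fun y => φ' (v y) * fderiv ℝ v y w := by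
    funext y; rw [h1 y]; rfl
  rw [h2]
  have hB : ContDiff ℝ 1 (fun y => fderiv ℝ v y w) :=
    (hv.fderiv_right (by norm_num)).clm_apply contDiff_const
  have hBx : HasFDerivAt (fun y => fderiv ℝ v y w)
      (fderiv ℝ (fun y => fderiv ℝ v y w) x) x :=
    (hB.differentiable one_ne_zero x).hasFDerivAt
  have hAx : HasFDerivAt (fun y => φ' (v y)) (φ'' (v x) • fderiv ℝ v x) x :=
    (hφ'' (v x)).comp_hasFDerivAt x (hvd x).hasFDerivAt
  rw [(hAx.fun_mul hBx).fderiv]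
  simp only [ContinuousLinearMap.add_apply, ContinuousLinearMap.smul_apply, smul_eq_mul]
  ring

/-- If `v` is a `C²` solution of the transformed semi-linear equation
`-Δv = (|r(v)|^{p-1} r(v) - V(x) r(v))/√(1 + 2 r(v)²)`, then `u := r ∘ v` is `C²` and
solves the quasi-linear equation `-Δu - u·Δ(u²) + V·u = |u|^{p-1}u`. -/
theorem change_of_variable_solves_quasilinear (r : ℝ → ℝ) (hr0 : r 0 = 0)
    (hr' : ∀ s : ℝ, HasDerivAt r ((Real.sqrt (1 + 2 * r s ^ 2))⁻¹) s)
    (N : ℕ) (hN : 1 ≤ N) (p : ℝ) (hp : 1 < p)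
    (V : EuclideanSpace ℝ (Fin N) → ℝ) (hV : Continuous V)
    (v : EuclideanSpace ℝ (Fin N) → ℝ) (hv : ContDiff ℝ 2 v)
    (hsol : ∀ x, -laplacian v x =
      (|r (v x)| ^ (p - 1) * r (v x) - V x * r (v x)) / Real.sqrt (1 + 2 * r (v x) ^ 2)) :
    ContDiff ℝ 2 (r ∘ v) ∧
      ∀ x, -laplacian (r ∘ v) x - r (v x) * laplacian (fun y => (r (v y)) ^ 2) x
            + V x * r (v x)
          = |r (v x)| ^ (p - 1) * r (v x) := by
  set g : ℝ → ℝ := fun s => (Real.sqrt (1 + 2 * r s ^ 2))⁻¹ with hg_def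
  set g' : ℝ → ℝ := fun s => -2 * r s * g s ^ 4 with hg'_def
  have hq : ∀ s : ℝ, (0:ℝ) < 1 + 2 * r s ^ 2 := fun s => by positivity
  have hsq : ∀ s : ℝ, (0:ℝ) < Real.sqrt (1 + 2 * r s ^ 2) := fun s =>
    Real.sqrt_pos.mpr (hq s)
  have hsq2 : ∀ s : ℝ, (Real.sqrt (1 + 2 * r s ^ 2)) ^ 2 = 1 + 2 * r s ^ 2 := fun s =>
    Real.sq_sqrt (hq s).le
  have hrd : Differentiable ℝ r := fun s => (hr' s).differentiableAt
  -- derivative of g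
  have hg' : ∀ s, HasDerivAt g (g' s) s := by
    intro s
    have hq' : HasDerivAt (fun t => 1 + 2 * r t ^ 2) (4 * r s * g s) s := by
      have := (((hr' s).fun_pow 2).const_mul 2).const_add 1
      refine this.congr_deriv ?_
      simp only [hg_def]
      push_cast
      ring
    have h2 : HasDerivAt (fun t => Real.sqrt (1 + 2 * r t ^ 2))
        ((4 * r s * g s) / (2 * Real.sqrt (1 + 2 * r s ^ 2))) s :=
      hq'.sqrt (by positivity)
    have h3 := h2.inv (hsq s).ne'
    refine h3.congr_deriv ?_
    have hs0 : Real.sqrt (1 + 2 * r s ^ 2) ≠ 0 := (hsq s).ne'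
    simp only [hg'_def, hg_def]
    field_simp
    ring
  have hgc : Continuous g := by
    have hqc : Continuous fun s => Real.sqrt (1 + 2 * r s ^ 2) :=
      Real.continuous_sqrt.comp
        (continuous_const.add (continuous_const.mul (hrd.continuous.pow 2)))
    exact hqc.inv₀ fun s => (hsq s).ne'
  have hg'c : Continuous g' :=
    (continuous_const.mul hrd.continuous).mul (hgc.pow 4)
  have hr2 : ContDiff ℝ 2 r := by
    rw [show (2 : WithTop ℕ∞) = 1 + 1 from by norm_num, contDiff_succ_iff_deriv]
    refine ⟨hrd, by simp, ?_⟩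
    have : deriv r = g := funext fun s => (hr' s).deriv
    rw [this]
    refine contDiff_one_iff_deriv.mpr ⟨fun s => (hg' s).differentiableAt, ?_⟩
    have : deriv g = g' := funext fun s => (hg' s).deriv
    rw [this]; exact hg'c
  refine ⟨hr2.comp hv, ?_⟩
  -- Laplacian chain rule
  have hlap : ∀ (φ φ' φ'' : ℝ → ℝ), (∀ s, HasDerivAt φ (φ' s) s) →
      (∀ s, HasDerivAt φ' (φ'' s) s) → ∀ x,
      laplacian (fun z => φ (v z)) x =
        φ'' (v x) * (∑ i : Fin N, (fderiv ℝ v x (EuclideanSpace.single i 1)) ^ 2)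
        + φ' (v x) * laplacian v x := by
    intro φ φ' φ'' h1 h2 x
    unfold laplacian
    rw [Finset.mul_sum, Finset.mul_sum, ← Finset.sum_add_distrib]
    exact Finset.sum_congr rfl fun i _ => aux_second φ φ' φ'' h1 h2 v hv _ x
  intro x
  have hrsq' : ∀ s, HasDerivAt (fun t => r t ^ 2) (2 * r s * g s) s := by
    intro s
    have := (hr' s).fun_pow 2
    refine this.congr_deriv ?_
    simp [hg_def]
  have hrsq'' : ∀ s, HasDerivAt (fun t => 2 * r t * g t)
      (2 * g s * g s + 2 * r s * g' s) s := by
    intro s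
    exact ((hr' s).const_mul 2).mul (hg' s)
  have e1 := hlap r g g' hr' hg' x
  have e2 := hlap (fun t => r t ^ 2) (fun t => 2 * r t * g t)
    (fun t => 2 * g t * g t + 2 * r t * g' t) hrsq' hrsq'' x
  have h1 : laplacian (r ∘ v) x = laplacian (fun z => r (v z)) x := rfl
  have h2 : laplacian (fun y => (r (v y)) ^ 2) x
      = laplacian (fun z => (fun t => r t ^ 2) (v z)) x := rfl
  rw [h1, h2, e1, e2]
  set a := r (v x) with ha
  set S := ∑ i : Fin N, (fderiv ℝ v x (EuclideanSpace.single i 1)) ^ 2 with hS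
  set L := laplacian v x with hL
  set A := |a| ^ (p - 1) * a with hA
  set s := Real.sqrt (1 + 2 * a ^ 2) with hs_def
  have hs0 : s ≠ 0 := (hsq (v x)).ne'
  have hs2 : s ^ 2 = 1 + 2 * a ^ 2 := hsq2 (v x)
  have hLval : L = -((A - V x * a) / s) := by
    have := hsol x
    rw [← hL, ← ha, ← hA, ← hs_def] at this
    linarith
  have hgval : g (v x) = s⁻¹ := rfl
  have hg'val : g' (v x) = -2 * a * (s⁻¹) ^ 4 := rfl
  have hLi : L = -((A - V x * a) * s⁻¹) := by rw [hLval, div_eq_mul_inv]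
  have hi2 : (1 + 2 * a ^ 2) * (s⁻¹) ^ 2 = 1 := by
    rw [← hs2]; field_simp
  rw [hgval, hg'val, hLi]
  linear_combination (2 * a * (s⁻¹) ^ 2 * S + A - V x * a) * hi2
end
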